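/- arXiv:1205.0260 — 5 statements merged into one kernel-verified Lean document; each statement's English description precedes it below -/
import Mathlib

section
/- Let p be a positive integer and t a positive integer. The number of quadruples (j1,j2,j3,j4) of integers in [0,t) with j1+j2 = j3+j4 and j4 ≡ j2 (mod p) equals ∑_{n∈ℤ} max(0, t−|n|·p)². -/
/-!
Write the quadruple as (j₁, j₂, j₃, j₄). Given j₁ + j₂ = j₃ + j₄, the congruence says that
j₄ - j₂ = j₁ - j₃ = n p for a unique n ∈ ℤ, and then the pairs (j₂, j₄) and (j₃, j₁) can be chosen
independently. For any d ∈ ℤ there are max(0, t - |d|) pairs in [0, t)² with difference d, so the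
fibre over n has max(0, t - |n| p)² elements; it is empty unless |n| < t.
-/

open Finset

lemma Nat.cast_sub_eq_max_zero {R : Type*} [Ring R] [LinearOrder R] [IsOrderedRing R] (a b : ℕ) :
    ((a - b : ℕ) : R) = max 0 ((a : R) - b) := by
  rcases le_total b a with h | h
  · rw [Nat.cast_sub h, max_eq_right (sub_nonneg.2 (Nat.mono_cast h))]
  · rw [Nat.sub_eq_zero_of_le h, Nat.cast_zero, max_eq_left (sub_nonpos.2 (Nat.mono_cast h))]

lemma card_filter_sub_eq (t : ℕ) (d : ℤ) :
    #{x : Fin t × Fin t | (x.2 : ℤ) - x.1 = d} = t - d.natAbs := by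
  rw [← card_range (t - d.natAbs)]
  -- With d = d⁺ - d⁻, the pairs are (a + d⁻, a + d⁺) for a < t - |d|.
  refine card_bij' (fun x _ ↦ x.1 - (-d).toNat)
    (fun a ha ↦ (⟨a + (-d).toNat, by rw [mem_range] at ha; omega⟩,
      ⟨a + d.toNat, by rw [mem_range] at ha; omega⟩))
    ?_ ?_ ?_ ?_
  · intro x hx
    simp only [mem_filter, mem_univ, true_and, mem_range] at hx ⊢
    omega
  · intro a ha
    simp only [mem_filter, mem_univ, true_and, mem_range] at ha ⊢
    omega
  · intro x hx
    simp only [mem_filter, mem_univ, true_and] at hx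
    ext <;> simp only <;> omega
  · intro a _
    simp

lemma card_filter_add_eq_add_and_sub_eq (t : ℕ) (d : ℤ) :
    #{q : Fin t × Fin t × Fin t × Fin t | (q.1 : ℕ) + q.2.1 = q.2.2.1 + q.2.2.2 ∧
      (q.2.2.2 : ℤ) - q.2.1 = d} = (t - d.natAbs) ^ 2 := by
  rw [sq, ← card_filter_sub_eq, ← card_product]
  refine card_nbij' (fun q ↦ ((q.2.1, q.2.2.2), (q.2.2.1, q.1)))
    (fun r ↦ (r.2.2, r.1.1, r.2.1, r.1.2)) ?_ ?_ (fun _ _ ↦ rfl) (fun _ _ ↦ rfl)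
  · intro q hq
    simp only [coe_filter, mem_univ, true_and, Set.mem_ofPred_eq, coe_product, Set.mem_prod] at hq ⊢
    omega
  · intro r hr
    simp only [coe_filter, mem_univ, true_and, Set.mem_ofPred_eq, coe_product, Set.mem_prod] at hr ⊢
    omega

lemma Nat.mod_eq_and_sub_ediv_eq_iff {p : ℕ} (hp : p ≠ 0) (a b : ℕ) (n : ℤ) :
    a % p = b % p ∧ ((a : ℤ) - b) / p = n ↔ (a : ℤ) - b = n * p := by
  rw [eq_comm, ← Nat.ModEq, Nat.modEq_iff_dvd]
  constructor
  · rintro ⟨hdvd, rfl⟩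
    exact (Int.ediv_mul_cancel hdvd).symm
  · intro h
    rw [h, Int.mul_ediv_cancel _ (Int.natCast_ne_zero.2 hp)]
    exact ⟨dvd_mul_left _ _, rfl⟩

lemma card_filter_add_eq_add_and_mod_eq (p t : ℕ) (hp : p ≠ 0) :
    #{q : Fin t × Fin t × Fin t × Fin t | (q.1 : ℕ) + q.2.1 = q.2.2.1 + q.2.2.2 ∧
      (q.2.2.2 : ℕ) % p = q.2.1 % p} = ∑ n ∈ Icc (-(t : ℤ)) t, (t - (n * p).natAbs) ^ 2 := by
  rw [card_eq_sum_card_fiberwise (f := fun q ↦ ((q.2.2.2 : ℤ) - q.2.1) / p)]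
  · refine sum_congr rfl fun n _ ↦ ?_
    rw [filter_filter, ← card_filter_add_eq_add_and_sub_eq]
    simp_rw [and_assoc, Nat.mod_eq_and_sub_ediv_eq_iff hp]
  · intro q _
    have := Int.natAbs_ediv_le_natAbs ((q.2.2.2 : ℤ) - q.2.1) p
    simp only [coe_Icc, Set.mem_Icc]
    omega

lemma max_zero_sub_abs_mul_eq (t p : ℕ) (n : ℤ) :
    max 0 ((t : ℝ) - |(n : ℝ)| * p) = ((t - (n * p).natAbs : ℕ) : ℝ) := by
  rw [Nat.cast_sub_eq_max_zero, Nat.cast_natAbs]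
  push_cast
  rw [abs_mul, Nat.abs_cast]

theorem quadruple_count_congruent_general (p t : ℕ) (hp : 0 < p) :
    ((Finset.univ.filter (fun q : Fin t × Fin t × Fin t × Fin t =>
      (q.1 : ℕ) + (q.2.1 : ℕ) = (q.2.2.1 : ℕ) + (q.2.2.2 : ℕ) ∧
      (q.2.2.2 : ℕ) % p = (q.2.1 : ℕ) % p)).card : ℝ)
      = ∑' n : ℤ, (max 0 ((t : ℝ) - |(n : ℝ)| * p)) ^ 2 := by
  simp_rw [max_zero_sub_abs_mul_eq]
  rw [tsum_eq_sum (s := Icc (-(t : ℤ)) t), card_filter_add_eq_add_and_mod_eq p t hp.ne']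
  · push_cast
    rfl
  · intro n hn
    have : n.natAbs ≤ (n * p).natAbs := by
      rw [Int.natAbs_mul, Int.natAbs_natCast]
      exact Nat.le_mul_of_pos_right _ hp
    simp only [mem_Icc] at hn
    rw [Nat.sub_eq_zero_of_le (by omega)]
    simp

theorem quadruple_count_congruent (p t : ℕ) (hp : 0 < p) (ht : 0 < t) :
    ((Finset.univ.filter (fun q : Fin t × Fin t × Fin t × Fin t =>
      (q.1 : ℕ) + (q.2.1 : ℕ) = (q.2.2.1 : ℕ) + (q.2.2.2 : ℕ) ∧
      (q.2.2.2 : ℕ) % p = (q.2.1 : ℕ) % p)).card : ℝ)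
      = ∑' n : ℤ, (max 0 ((t : ℝ) - |(n : ℝ)| * p)) ^ 2 :=
  quadruple_count_congruent_general p t hp
end

section
/- Let f(z) = ∑_{j=0}^{t−1} f_j z^j be a polynomial with coefficients f_j ∈ {1,−1}, and suppose f_j = f_k whenever j ≡ k (mod m) for a positive integer m. Then the L⁴ norm of f on the unit circle satisfies ||f||₄⁴ ≥ ∑_{n∈ℤ} max(0, t−|n|·m)². -/
/-!
On the unit circle `|f(e^{iθ})|² = ∑_d c_d e^{idθ}`, where `c_d = ∑_{j - k = d} f_j \overline{f_k}`
is the aperiodic autocorrelation of the coefficients, so Parseval gives `‖f‖₄⁴ = ∑_d |c_d|²`.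
For unimodular `m`-periodic coefficients every term of `c_{nm}` equals `|f_k|² = 1`, hence
`|c_{nm}| = max 0 (t - |n| m)`, and the sum over the multiples `d = nm` is at most the full sum.
-/

open Complex ComplexConjugate Finset intervalIntegral

theorem integral_exp_int_mul_mul_I (d : ℤ) :
    ∫ θ in (0:ℝ)..2 * Real.pi, exp (d * θ * I) = if d = 0 then (2 * Real.pi : ℂ) else 0 := by
  split_ifs with hd
  · simp [hd]
  have hdI : (d : ℂ) * I ≠ 0 := mul_ne_zero (Int.cast_ne_zero.mpr hd) I_ne_zero
  have hper : exp (d * I * (2 * Real.pi)) = 1 := by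
    rw [← exp_int_mul_two_pi_mul_I d]; ring_nf
  simp_rw [mul_right_comm _ _ I]
  simp [integral_exp_mul_complex hdI, hper]

theorem ofReal_norm_sq_sum_exp {ι : Type*} (s : Finset ι) (c : ι → ℂ) (e : ι → ℤ) (θ : ℝ) :
    ((‖∑ i ∈ s, c i * exp (e i * θ * I)‖ ^ 2 : ℝ) : ℂ)
      = ∑ i ∈ s, ∑ j ∈ s, c i * conj (c j) * exp (((e i - e j : ℤ) : ℂ) * θ * I) := by
  rw [ofReal_pow, ← mul_conj', map_sum, sum_mul_sum]
  refine sum_congr rfl fun i _ => sum_congr rfl fun j _ => ?_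
  rw [map_mul, ← exp_conj, mul_mul_mul_comm, ← exp_add]
  congr 2
  simp
  ring

theorem integral_norm_sq_sum_exp (s : Finset ℤ) (c : ℤ → ℂ) :
    ∫ θ in (0:ℝ)..2 * Real.pi, ‖∑ d ∈ s, c d * exp (d * θ * I)‖ ^ 2
      = 2 * Real.pi * ∑ d ∈ s, ‖c d‖ ^ 2 := by
  have hint : ∀ d e : ℤ, IntervalIntegrable
      (fun θ : ℝ => c d * conj (c e) * exp (((d - e : ℤ) : ℂ) * θ * I)) MeasureTheory.volume
      0 (2 * Real.pi) :=
    fun d e => (by fun_prop : Continuous _).intervalIntegrable _ _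
  apply ofReal_injective
  rw [← intervalIntegral.integral_ofReal]
  simp_rw [ofReal_norm_sq_sum_exp]
  rw [integral_finsetSum fun d _ =>
    (by fun_prop : Continuous _).intervalIntegrable _ _, ofReal_mul,
    ofReal_sum, mul_sum]
  refine sum_congr rfl fun d hd => ?_
  simp only [integral_finsetSum fun e _ => hint d e, integral_const_mul,
    integral_exp_int_mul_mul_I, sub_eq_zero, mul_ite, mul_zero]
  rw [sum_ite_eq s d, if_pos hd, ofReal_pow, ← mul_conj']
  push_cast
  ring

theorem Polynomial.eval_eq_sum_range_of_coeff_eq_zero {R : Type*} [Semiring R] {p : Polynomial R}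
    {n : ℕ} (hp : ∀ j, n ≤ j → p.coeff j = 0) (x : R) :
    p.eval x = ∑ j ∈ range n, p.coeff j * x ^ j := by
  rcases eq_or_ne p 0 with rfl | hp0
  · simp
  refine eval_eq_sum_range' (not_le.mp fun h => ?_) x
  exact leadingCoeff_ne_zero.mpr hp0 (hp _ h)

noncomputable def autocorrelation (a : ℕ → ℂ) (t : ℕ) (d : ℤ) : ℂ :=
  ∑ p ∈ range t ×ˢ range t with (p.1 : ℤ) - p.2 = d, a p.1 * conj (a p.2)

section

variable (a : ℕ → ℂ) (t : ℕ)

theorem autocorrelation_eq_zero_of_notMem {d : ℤ} (hd : d ∉ Ioo (-t : ℤ) t) :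
    autocorrelation a t d = 0 := by
  refine sum_eq_zero fun p hp => absurd ?_ hd
  simp only [mem_filter, mem_product, mem_range] at hp
  rw [mem_Ioo]
  omega

theorem autocorrelation_neg (d : ℤ) :
    autocorrelation a t (-d) = conj (autocorrelation a t d) := by
  rw [autocorrelation, autocorrelation, map_sum]
  refine sum_nbij' Prod.swap Prod.swap ?_ ?_ (fun _ _ => rfl) (fun _ _ => rfl) ?_
  · simp only [mem_filter, mem_product, mem_range, Prod.fst_swap, Prod.snd_swap, Prod.forall]
    omega
  · simp only [mem_filter, mem_product, mem_range, Prod.fst_swap, Prod.snd_swap, Prod.forall]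
    omega
  · intro p _
    rw [Prod.fst_swap, Prod.snd_swap, map_mul, conj_conj, mul_comm]

theorem autocorrelation_natCast (u : ℕ) :
    autocorrelation a t u = ∑ k ∈ range (t - u), a (k + u) * conj (a k) := by
  have hfst : ∀ p ∈ {p ∈ range t ×ˢ range t | (p.1 : ℤ) - p.2 = u}, p.1 = p.2 + u := by
    simp only [mem_filter, Prod.forall]
    omega
  refine sum_nbij' Prod.snd (fun k => (k + u, k)) ?_ ?_ ?_ ?_ ?_
  · simp only [mem_filter, mem_product, mem_range, Prod.forall]
    omega
  · simp only [mem_filter, mem_product, mem_range]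
    omega
  · exact fun p hp => Prod.ext (hfst p hp).symm rfl
  · exact fun _ _ => rfl
  · exact fun p hp => by rw [hfst p hp]

theorem norm_sq_sum_exp_eq_sum_autocorrelation (θ : ℝ) :
    ((‖∑ j ∈ range t, a j * exp (j * θ * I)‖ ^ 2 : ℝ) : ℂ)
      = ∑ d ∈ Ioo (-t : ℤ) t, autocorrelation a t d * exp (d * θ * I) := by
  have hmaps : ∀ p ∈ range t ×ˢ range t, (p.1 : ℤ) - p.2 ∈ Ioo (-t : ℤ) t := by
    simp only [mem_product, mem_range, mem_Ioo, Prod.forall]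
    omega
  calc ((‖∑ j ∈ range t, a j * exp (j * θ * I)‖ ^ 2 : ℝ) : ℂ)
      = ∑ p ∈ range t ×ˢ range t, a p.1 * conj (a p.2) * exp (((p.1 - p.2 : ℤ) : ℂ) * θ * I) := by
        simpa [sum_product] using ofReal_norm_sq_sum_exp (range t) a Nat.cast θ
    _ = ∑ d ∈ Ioo (-t : ℤ) t, ∑ p ∈ range t ×ˢ range t with (p.1 : ℤ) - p.2 = d,
          a p.1 * conj (a p.2) * exp (((p.1 - p.2 : ℤ) : ℂ) * θ * I) :=
        (sum_fiberwise_of_maps_to hmaps _).symm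
    _ = _ := by
        simp_rw [autocorrelation, sum_mul]
        refine sum_congr rfl fun d _ => sum_congr rfl fun p hp => ?_
        rw [(mem_filter.mp hp).2]

theorem autocorrelation_natCast_of_shift_eq {u : ℕ} (hunit : ∀ j < t, ‖a j‖ = 1)
    (hshift : ∀ k, k + u < t → a (k + u) = a k) :
    autocorrelation a t u = (t - u : ℕ) := by
  rw [autocorrelation_natCast]
  have hone : ∀ k ∈ range (t - u), a (k + u) * conj (a k) = 1 := fun k hk => by
    have hk : k + u < t := by rw [mem_range] at hk; omega
    rw [hshift k hk, mul_conj', hunit k (by omega)]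
    norm_num
  rw [sum_congr rfl hone, sum_const, card_range, nsmul_one]

theorem norm_autocorrelation_intCast_mul_of_periodic {m : ℕ} (hunit : ∀ j < t, ‖a j‖ = 1)
    (hper : ∀ j k, j < t → k < t → j % m = k % m → a j = a k) (n : ℤ) :
    ‖autocorrelation a t (n * m)‖ = max 0 ((t : ℝ) - |(n : ℝ)| * m) := by
  have hshift : ∀ k, k + n.natAbs * m < t → a (k + n.natAbs * m) = a k := fun k hk =>
    hper _ _ hk (by omega) (Nat.add_mul_mod_self_right _ _ _)
  have hnorm : ‖autocorrelation a t (n * m)‖ = (t - n.natAbs * m : ℕ) := by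
    have hnat := congrArg norm (autocorrelation_natCast_of_shift_eq a t hunit hshift)
    obtain ⟨k, rfl | rfl⟩ := Int.eq_nat_or_neg n <;>
      simp only [Int.natAbs_neg, Int.natAbs_natCast, Nat.cast_mul, norm_natCast] at hnat ⊢
    · exact hnat
    · rw [neg_mul, autocorrelation_neg, RCLike.norm_conj, hnat]
  have habs : |(n : ℝ)| * m = (n.natAbs * m : ℕ) := by
    push_cast [Nat.cast_natAbs, Int.cast_abs]
    rfl
  rw [hnorm, habs]
  rcases le_total t (n.natAbs * m) with h | h
  · rw [Nat.sub_eq_zero_of_le h, max_eq_left (by rw [sub_nonpos]; exact_mod_cast h)]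
    simp
  · rw [Nat.cast_sub h, max_eq_right (by rw [sub_nonneg]; exact_mod_cast h)]

end

theorem integral_norm_eval_exp_pow_four {f : Polynomial ℂ} {t : ℕ}
    (hf : ∀ j, t ≤ j → f.coeff j = 0) :
    ∫ θ in (0:ℝ)..2 * Real.pi, ‖f.eval (exp (θ * I))‖ ^ 4
      = 2 * Real.pi * ∑ d ∈ Ioo (-t : ℤ) t, ‖autocorrelation f.coeff t d‖ ^ 2 := by
  have hpow : ∀ θ : ℝ, ‖f.eval (exp (θ * I))‖ ^ 4
      = ‖∑ d ∈ Ioo (-t : ℤ) t, autocorrelation f.coeff t d * exp (d * θ * I)‖ ^ 2 := by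
    intro θ
    rw [← norm_sq_sum_exp_eq_sum_autocorrelation, norm_real, Real.norm_of_nonneg (by positivity),
      Polynomial.eval_eq_sum_range_of_coeff_eq_zero hf]
    simp_rw [← exp_nat_mul, mul_assoc]
    ring
  simp_rw [hpow]
  exact integral_norm_sq_sum_exp _ _

theorem littlewood_periodic_L4_lower_bound_general (t m : ℕ) (hm : 0 < m)
    (f : Polynomial ℂ)
    (hcoeff : ∀ j < t, f.coeff j = 1 ∨ f.coeff j = -1)
    (hdeg : ∀ j, t ≤ j → f.coeff j = 0)
    (hper : ∀ j k, j < t → k < t → j % m = k % m → f.coeff j = f.coeff k) :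
    (1 / (2 * Real.pi)) *
      ∫ θ in (0:ℝ)..(2 * Real.pi), ‖f.eval (Complex.exp (θ * Complex.I))‖ ^ 4
      ≥ ∑' n : ℤ, (max 0 ((t : ℝ) - |(n : ℝ)| * m)) ^ 2 := by
  have hunit : ∀ j < t, ‖f.coeff j‖ = 1 := fun j hj => by
    rcases hcoeff j hj with h | h <;> simp [h]
  have hvanish : ∀ d ∉ Ioo (-t : ℤ) t, ‖autocorrelation f.coeff t d‖ ^ 2 = 0 := fun d hd => by
    simp [autocorrelation_eq_zero_of_notMem _ _ hd]
  have hinj : Function.Injective fun n : ℤ => n * m := mul_left_injective₀ (by omega)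
  rw [integral_norm_eval_exp_pow_four hdeg, ← mul_assoc, one_div_mul_cancel (by positivity),
    one_mul, ← tsum_eq_sum (L := .unconditional ℤ) hvanish]
  simp_rw [← norm_autocorrelation_intCast_mul_of_periodic _ _ hunit hper]
  exact tsum_comp_le_tsum_of_inj (summable_of_ne_finset_zero hvanish) (fun _ => by positivity) hinj

theorem littlewood_periodic_L4_lower_bound (t m : ℕ) (ht : 0 < t) (hm : 0 < m)
    (f : Polynomial ℂ)
    (hcoeff : ∀ j < t, f.coeff j = 1 ∨ f.coeff j = -1)
    (hdeg : ∀ j, t ≤ j → f.coeff j = 0)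
    (hper : ∀ j k, j < t → k < t → j % m = k % m → f.coeff j = f.coeff k) :
    (1 / (2 * Real.pi)) *
      ∫ θ in (0:ℝ)..(2 * Real.pi), ‖f.eval (Complex.exp (θ * Complex.I))‖ ^ 4
      ≥ ∑' n : ℤ, (max 0 ((t : ℝ) - |(n : ℝ)| * m)) ^ 2 :=
  littlewood_periodic_L4_lower_bound_general t m hm f hcoeff hdeg hper
end

section
/- Let n ≥ 2 be an integer and ε_j = e^{2πij/n}. Then ∑_{j=1}^{n−1} 1/|1−ε_j| ≤ n·log n. -/
/-!
Since `|1 - e^{iθ}| = 2 sin (θ / 2)` on `[0, 2π]`, the `j`-th term is `1 / (2 sin (π j / n))`.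
Jordan's inequality `sin x ≥ (2 / π) min (x, π - x)` bounds it by `n / 4 · (1 / j + 1 / (n - j))`,
so the sum is at most `n / 2 · H_{n-1} ≤ n / 2 · (1 + log (n - 1)) ≤ n log n`.
-/

open Real Finset

namespace Real

lemma two_div_pi_mul_min_le_sin {x : ℝ} (hx₀ : 0 ≤ x) (hxπ : x ≤ π) :
    2 / π * min x (π - x) ≤ sin x := by
  rcases le_total x (π / 2) with hx | hx
  · calc 2 / π * min x (π - x) ≤ 2 / π * x := by gcongr; exact min_le_left _ _
      _ ≤ sin x := mul_le_sin hx₀ hx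
  · calc 2 / π * min x (π - x) ≤ 2 / π * (π - x) := by gcongr; exact min_le_right _ _
      _ ≤ sin (π - x) := mul_le_sin (by linarith) (by linarith)
      _ = sin x := sin_pi_sub x

lemma one_div_sin_le {x : ℝ} (hx₀ : 0 < x) (hxπ : x < π) :
    1 / sin x ≤ π / 2 * (x⁻¹ + (π - x)⁻¹) := by
  have hmin : 0 < min x (π - x) := lt_min hx₀ (by linarith)
  calc 1 / sin x ≤ 1 / (2 / π * min x (π - x)) :=
        one_div_le_one_div_of_le (by positivity) (two_div_pi_mul_min_le_sin hx₀.le hxπ.le)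
    _ = π / 2 * (min x (π - x))⁻¹ := by field_simp
    _ ≤ π / 2 * (x⁻¹ + (π - x)⁻¹) := by
        gcongr
        rcases min_choice x (π - x) with h | h <;> rw [h]
        · linarith [inv_pos.2 (sub_pos.2 hxπ)]
        · linarith [inv_pos.2 hx₀]

end Real

lemma one_div_two_sin_pi_mul_div_le {t s : ℝ} (ht : 0 < t) (hts : t < s) :
    1 / (2 * sin (π * t / s)) ≤ s / 4 * (t⁻¹ + (s - t)⁻¹) := by
  have hs : 0 < s := ht.trans hts
  have hx : π * t / s < π := by rw [div_lt_iff₀ hs]; nlinarith [pi_pos]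
  have key := one_div_sin_le (by positivity) hx
  have hcompl : π - π * t / s = π * (s - t) / s := by field_simp
  rw [hcompl] at key
  calc 1 / (2 * sin (π * t / s)) = 1 / 2 * (1 / sin (π * t / s)) := by ring
    _ ≤ 1 / 2 * (π / 2 * ((π * t / s)⁻¹ + (π * (s - t) / s)⁻¹)) := by gcongr
    _ = s / 4 * (t⁻¹ + (s - t)⁻¹) := by
        have hπ : π ≠ 0 := pi_pos.ne'
        have hst : s - t ≠ 0 := by linarith
        field_simp
        ring

lemma norm_one_sub_exp_two_pi_I_mul_div {j n : ℕ} (hjn : j ≤ n) :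
    ‖(1 : ℂ) - Complex.exp (2 * π * Complex.I * j / n)‖ = 2 * sin (π * j / n) := by
  have harg : (2 * π * Complex.I * j / n : ℂ) = Complex.I * ((2 * π * j / n : ℝ) : ℂ) := by
    push_cast; ring
  have hsin : 0 ≤ sin (π * j / n) := by
    apply sin_nonneg_of_nonneg_of_le_pi (by positivity)
    rw [mul_div_assoc]
    exact mul_le_of_le_one_right pi_pos.le
      (div_le_one_of_le₀ (by exact_mod_cast hjn) (by positivity))
  rw [norm_sub_rev, harg, Complex.norm_exp_I_mul_ofReal_sub_one,
    show 2 * π * j / n / 2 = π * j / n by ring, norm_mul, Real.norm_of_nonneg hsin, Real.norm_two]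

lemma sum_Ico_one_inv_eq_harmonic (n : ℕ) :
    ∑ j ∈ Ico 1 n, (j : ℝ)⁻¹ = harmonic (n - 1) := by
  rw [sum_Ico_eq_sum_range, harmonic]
  push_cast
  simp only [add_comm]

lemma sum_Ico_one_inv_add_inv_sub (n : ℕ) :
    ∑ j ∈ Ico 1 n, ((j : ℝ)⁻¹ + ((n : ℝ) - j)⁻¹) = 2 * harmonic (n - 1) := by
  have hreflect : ∑ j ∈ Ico 1 n, ((n : ℝ) - j)⁻¹ = ∑ j ∈ Ico 1 n, (j : ℝ)⁻¹ := by
    calc ∑ j ∈ Ico 1 n, ((n : ℝ) - j)⁻¹ = ∑ j ∈ Ico 1 n, (((n - j : ℕ) : ℝ))⁻¹ :=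
          sum_congr rfl fun j hj => by rw [Nat.cast_sub (mem_Ico.1 hj).2.le]
      _ = ∑ j ∈ Ico (n + 1 - n) (n + 1 - 1), (j : ℝ)⁻¹ :=
          sum_Ico_reflect (fun j => (j : ℝ)⁻¹) 1 n.le_succ
      _ = ∑ j ∈ Ico 1 n, (j : ℝ)⁻¹ := by simp
  rw [sum_add_distrib, hreflect, sum_Ico_one_inv_eq_harmonic]
  ring

/-- `e (x - 1) ≤ x²` because `x² - e x + e` has negative discriminant, as `e < 4`. -/
lemma one_add_log_sub_one_le_two_mul_log {x : ℝ} (hx : 1 < x) :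
    1 + log (x - 1) ≤ 2 * log x := by
  have he : exp 1 < 4 := exp_one_lt_d9.trans (by norm_num)
  calc 1 + log (x - 1) = log (exp 1 * (x - 1)) := by
        rw [log_mul (exp_pos 1).ne' (by linarith), log_exp]
    _ ≤ log (x ^ 2) := log_le_log (by nlinarith [exp_pos 1]) (by nlinarith [sq_nonneg (x - 2)])
    _ = 2 * log x := by rw [log_pow]; norm_num

theorem sum_inv_dist_roots_of_unity (n : ℕ) (hn : 2 ≤ n) :
    ∑ j ∈ Finset.Ico 1 n,
      1 / ‖(1 : ℂ) - Complex.exp (2 * Real.pi * Complex.I * j / n)‖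
      ≤ (n : ℝ) * Real.log n := by
  have hn' : (1 : ℝ) < n := by exact_mod_cast hn
  calc ∑ j ∈ Ico 1 n, 1 / ‖(1 : ℂ) - Complex.exp (2 * π * Complex.I * j / n)‖
      = ∑ j ∈ Ico 1 n, 1 / (2 * sin (π * j / n)) :=
        sum_congr rfl fun j hj => by rw [norm_one_sub_exp_two_pi_I_mul_div (mem_Ico.1 hj).2.le]
    _ ≤ ∑ j ∈ Ico 1 n, (n : ℝ) / 4 * ((j : ℝ)⁻¹ + ((n : ℝ) - j)⁻¹) := by
        refine sum_le_sum fun j hj => ?_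
        obtain ⟨hj₁, hjn⟩ := mem_Ico.1 hj
        exact one_div_two_sin_pi_mul_div_le (by exact_mod_cast hj₁) (by exact_mod_cast hjn)
    _ = n / 2 * harmonic (n - 1) := by
        rw [← mul_sum, sum_Ico_one_inv_add_inv_sub]; ring
    _ ≤ n / 2 * (1 + log (n - 1)) := by
        gcongr
        simpa [Nat.cast_sub (by omega : 1 ≤ n)] using harmonic_le_one_add_log (n - 1)
    _ ≤ n / 2 * (2 * log n) := by gcongr; exact one_add_log_sub_one_le_two_mul_log hn'
    _ = n * log n := by ring
end

section
/- Let n ≥ 2 be an integer, ε_j = e^{2πij/n}, and let t ≥ 1 and d ≥ 0 be integers. Then ∑_{j∈ℤ/nℤ} |∑_{h=0}^{t−1} (h+1)^d ε_j^h| ≤ t^{d+1} + 2^{d+1} t^d n log n. -/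
/-!
The term `j = 0` is bounded termwise by `t ^ d`. For `0 < j < n` the root `z = ε_j` has
`‖z - 1‖ = 2 sin (π j / n)`, so all partial sums of `z ^ h` are at most `1 / sin (π j / n)`, and
Abel summation against the increasing weights `(h + 1) ^ d` bounds the inner sum by
`(2 t ^ d - 1) / sin (π j / n)`. Jordan's inequality gives `sin (π x) ≥ 2 x (1 - x)`, i.e.
`1 / sin (π j / n) ≤ (n / 2) (1 / j + 1 / (n - j))`, and summing over `j` leaves
`n H_{n-1} ≤ n (1 + log (n - 1)) ≤ 2 n log n`.
-/

open Finset Real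

theorem two_mul_mul_one_sub_le_sin_pi_mul {x : ℝ} (h0 : 0 ≤ x) (h1 : x ≤ 1) :
    2 * x * (1 - x) ≤ sin (π * x) := by
  wlog hx : x ≤ 1 / 2 generalizing x
  · have := this (x := 1 - x) (by linarith) (by linarith) (by linarith)
    rw [show π * (1 - x) = π - π * x by ring, sin_pi_sub] at this
    linarith
  have hsin : 2 / π * (π * x) ≤ sin (π * x) :=
    mul_le_sin (by positivity) (by nlinarith [pi_pos])
  rw [← mul_assoc, div_mul_cancel₀ _ pi_ne_zero] at hsin
  nlinarith

theorem inv_sin_pi_mul_le {x : ℝ} (h0 : 0 < x) (h1 : x < 1) :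
    (sin (π * x))⁻¹ ≤ (x⁻¹ + (1 - x)⁻¹) / 2 := by
  have h1x : 0 < 1 - x := by linarith
  calc (sin (π * x))⁻¹ ≤ (2 * x * (1 - x))⁻¹ :=
        inv_anti₀ (by positivity) (two_mul_mul_one_sub_le_sin_pi_mul h0.le h1.le)
    _ = (x⁻¹ + (1 - x)⁻¹) / 2 := by field_simp; ring

theorem one_add_log_le_two_mul_log_add_one {x : ℝ} (hx : 0 < x) :
    1 + log x ≤ 2 * log (x + 1) := by
  have he : exp 1 * x ≤ (x + 1) ^ 2 := by
    nlinarith [mul_lt_mul_of_pos_right exp_one_lt_d9 hx, sq_nonneg (x - 1)]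
  calc 1 + log x = log (exp 1 * x) := by rw [log_mul (exp_pos 1).ne' hx.ne', log_exp]
    _ ≤ log ((x + 1) ^ 2) := log_le_log (by positivity) he
    _ = 2 * log (x + 1) := by rw [log_pow]; norm_num

theorem sum_Ico_one_inv_le_two_mul_log {n : ℕ} (hn : 2 ≤ n) :
    ∑ j ∈ Ico 1 n, (j : ℝ)⁻¹ ≤ 2 * log n := by
  obtain ⟨m, rfl⟩ := Nat.exists_eq_add_of_le' (Nat.one_le_of_lt hn)
  have hm : (0 : ℝ) < m := by exact_mod_cast (by omega : 0 < m)
  have hharm : ∑ j ∈ Ico 1 (m + 1), (j : ℝ)⁻¹ = harmonic m := by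
    simp [Ico_add_one_right_eq_Icc, harmonic_eq_sum_Icc]
  rw [hharm, Nat.cast_succ]
  exact (harmonic_le_one_add_log m).trans (one_add_log_le_two_mul_log_add_one hm)

theorem sum_Ico_inv_sin_pi_mul_div_le {n : ℕ} (hn : 2 ≤ n) :
    ∑ j ∈ Ico 1 n, (sin (π * j / n))⁻¹ ≤ 2 * n * log n := by
  have hn0 : (0 : ℝ) < n := by positivity
  have hterm : ∀ j ∈ Ico 1 n,
      (sin (π * j / n))⁻¹ ≤ n / 2 * ((j : ℝ)⁻¹ + ((n - j : ℕ) : ℝ)⁻¹) := by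
    intro j hj
    obtain ⟨hj1, hjn⟩ := mem_Ico.mp hj
    have hj0 : (0 : ℝ) < j := by exact_mod_cast hj1
    have hjn' : (j : ℝ) < n := by exact_mod_cast hjn
    have := inv_sin_pi_mul_le (x := j / n) (by positivity) ((div_lt_one hn0).mpr hjn')
    rw [← mul_div_assoc] at this
    refine this.trans_eq ?_
    rw [Nat.cast_sub hjn.le]
    field_simp
  have hreflect : ∑ j ∈ Ico 1 n, ((n - j : ℕ) : ℝ)⁻¹ = ∑ j ∈ Ico 1 n, (j : ℝ)⁻¹ := by
    rw [sum_Ico_reflect (fun j => (j : ℝ)⁻¹) 1 n.le_succ]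
    simp
  calc ∑ j ∈ Ico 1 n, (sin (π * j / n))⁻¹
      ≤ ∑ j ∈ Ico 1 n, n / 2 * ((j : ℝ)⁻¹ + ((n - j : ℕ) : ℝ)⁻¹) := sum_le_sum hterm
    _ = n * ∑ j ∈ Ico 1 n, (j : ℝ)⁻¹ := by rw [← mul_sum, sum_add_distrib, hreflect]; ring
    _ ≤ n * (2 * log n) := by gcongr; exact sum_Ico_one_inv_le_two_mul_log hn
    _ = 2 * n * log n := by ring

theorem Monotone.norm_sum_range_succ_smul_le {E : Type*} [SeminormedAddCommGroup E]
    [NormedSpace ℝ E] {f : ℕ → ℝ} {z : ℕ → E} {b : ℝ} (hf : Monotone f) (hf0 : 0 ≤ f 0)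
    (hz : ∀ k, ‖∑ i ∈ range k, z i‖ ≤ b) (n : ℕ) :
    ‖∑ i ∈ range (n + 1), f i • z i‖ ≤ (2 * f n - f 0) * b := by
  have hfn : 0 ≤ f n := hf0.trans (hf n.zero_le)
  rw [sum_range_by_parts, Nat.add_sub_cancel]
  calc _ ≤ ‖f n • ∑ i ∈ range (n + 1), z i‖
        + ‖∑ i ∈ range n, (f (i + 1) - f i) • ∑ j ∈ range (i + 1), z j‖ := norm_sub_le _ _
    _ ≤ f n * b + ∑ i ∈ range n, (f (i + 1) - f i) * b := by
        gcongr
        · rw [norm_smul, norm_of_nonneg hfn]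
          gcongr
          exact hz _
        · refine norm_sum_le_of_le _ fun i _ => ?_
          rw [norm_smul, norm_of_nonneg (sub_nonneg.mpr (hf i.le_succ))]
          gcongr
          · exact sub_nonneg.mpr (hf i.le_succ)
          · exact hz _
    _ = (2 * f n - f 0) * b := by rw [← sum_mul, sum_range_sub]; ring

theorem norm_geom_sum_le {K : Type*} [NormedDivisionRing K] {z : K} (hz : ‖z‖ ≤ 1)
    (hz1 : z ≠ 1) (k : ℕ) : ‖∑ i ∈ range k, z ^ i‖ ≤ 2 / ‖z - 1‖ := by
  rw [geom_sum_eq hz1, norm_div]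
  gcongr
  calc ‖z ^ k - 1‖ ≤ ‖z ^ k‖ + ‖(1 : K)‖ := norm_sub_le _ _
    _ ≤ 2 := by rw [norm_pow, norm_one]; linarith [pow_le_one₀ (norm_nonneg z) hz (n := k)]

theorem norm_sum_range_add_one_pow_mul_pow_le {z : ℂ} (hz : ‖z‖ ≤ 1) (t d : ℕ) :
    ‖∑ h ∈ range t, ((h : ℂ) + 1) ^ d * z ^ h‖ ≤ (t : ℝ) ^ (d + 1) := by
  have hterm : ∀ h ∈ range t, ‖((h : ℂ) + 1) ^ d * z ^ h‖ ≤ (t : ℝ) ^ d := by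
    intro h hh
    have hht : (h : ℝ) + 1 ≤ t := by exact_mod_cast mem_range.mp hh
    rw [norm_mul, norm_pow, norm_pow, ← Nat.cast_succ, Complex.norm_natCast, Nat.cast_succ]
    calc ((h : ℝ) + 1) ^ d * ‖z‖ ^ h ≤ ((h : ℝ) + 1) ^ d * 1 := by
          gcongr; exact pow_le_one₀ (norm_nonneg z) hz
      _ ≤ (t : ℝ) ^ d := by rw [mul_one]; gcongr
  refine (norm_sum_le_of_le _ hterm).trans_eq ?_
  rw [sum_const, card_range, nsmul_eq_mul, pow_succ']

theorem norm_sum_range_add_one_pow_mul_pow_le_of_ne_one {z : ℂ} (hz : ‖z‖ ≤ 1) (hz1 : z ≠ 1)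
    {t : ℕ} (ht : 1 ≤ t) (d : ℕ) :
    ‖∑ h ∈ range t, ((h : ℂ) + 1) ^ d * z ^ h‖ ≤ (2 * (t : ℝ) ^ d - 1) * (2 / ‖z - 1‖) := by
  obtain ⟨s, rfl⟩ := Nat.exists_eq_add_of_le' ht
  have hmono : Monotone fun h : ℕ => ((h : ℝ) + 1) ^ d := fun a b hab => by
    dsimp only; gcongr
  have := hmono.norm_sum_range_succ_smul_le (by positivity) (norm_geom_sum_le hz hz1) s
  simp only [Complex.real_smul, Nat.cast_zero, zero_add, one_pow] at this
  push_cast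
  exact_mod_cast this

theorem norm_exp_two_pi_I_mul_div_sub_one (j n : ℕ) :
    ‖Complex.exp (2 * π * Complex.I * j / n) - 1‖ = 2 * |sin (π * j / n)| := by
  have harg : 2 * π * Complex.I * j / n = Complex.I * ((2 * π * j / n : ℝ) : ℂ) := by
    push_cast; ring
  rw [harg, Complex.norm_exp_I_mul_ofReal_sub_one, norm_mul, Real.norm_two, Real.norm_eq_abs]
  congr 3
  ring

theorem norm_sum_range_add_one_pow_mul_exp_le {j n : ℕ} (hj : 0 < j) (hjn : j < n) {t : ℕ}
    (ht : 1 ≤ t) (d : ℕ) :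
    ‖∑ h ∈ range t, ((h : ℂ) + 1) ^ d * Complex.exp (2 * π * Complex.I * j / n) ^ h‖
      ≤ 2 ^ d * (t : ℝ) ^ d * (sin (π * j / n))⁻¹ := by
  have hsin : 0 < sin (π * j / n) := by
    have hj0 : (0 : ℝ) < j := by exact_mod_cast hj
    have hjn' : (j : ℝ) < n := by exact_mod_cast hjn
    have hn0 : (0 : ℝ) < n := hj0.trans hjn'
    apply sin_pos_of_pos_of_lt_pi (by positivity)
    rw [div_lt_iff₀ hn0]
    nlinarith [pi_pos]
  have hnorm := norm_exp_two_pi_I_mul_div_sub_one j n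
  rw [abs_of_pos hsin] at hnorm
  have hz : ‖Complex.exp (2 * π * Complex.I * j / n)‖ ≤ 1 := by
    rw [Complex.norm_exp]; simp
  have hz1 : Complex.exp (2 * π * Complex.I * j / n) ≠ 1 := by
    rw [← sub_ne_zero, ← norm_pos_iff, hnorm]; positivity
  have hweight : 2 * (t : ℝ) ^ d - 1 ≤ 2 ^ d * (t : ℝ) ^ d := by
    have htR : (1 : ℝ) ≤ t := by exact_mod_cast ht
    rcases d with _ | d
    · norm_num
    · nlinarith [one_le_pow₀ htR (n := d + 1), one_le_pow₀ (one_le_two (α := ℝ)) (n := d),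
        pow_succ (2 : ℝ) d]
  refine (norm_sum_range_add_one_pow_mul_pow_le_of_ne_one hz hz1 ht d).trans ?_
  rw [hnorm, div_mul_cancel_left₀ two_ne_zero, ← one_div]
  gcongr

theorem weighted_root_of_unity_full_sum_bound (n : ℕ) (hn : 2 ≤ n) (t d : ℕ)
    (ht : 1 ≤ t) :
    ∑ j ∈ Finset.range n,
      ‖∑ h ∈ Finset.range t,
        ((h : ℂ) + 1) ^ d * Complex.exp (2 * Real.pi * Complex.I * j / n) ^ h‖
      ≤ (t : ℝ) ^ (d + 1) + 2 ^ (d + 1) * (t : ℝ) ^ d * n * Real.log n := by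
  rw [range_eq_Ico, sum_eq_sum_Ico_succ_bot (by omega)]
  gcongr
  · exact norm_sum_range_add_one_pow_mul_pow_le (by simp) t d
  · calc _ ≤ ∑ j ∈ Ico 1 n, 2 ^ d * (t : ℝ) ^ d * (sin (π * j / n))⁻¹ :=
          sum_le_sum fun j hj => norm_sum_range_add_one_pow_mul_exp_le (mem_Ico.mp hj).1
            (mem_Ico.mp hj).2 ht d
      _ = 2 ^ d * (t : ℝ) ^ d * ∑ j ∈ Ico 1 n, (sin (π * j / n))⁻¹ := (mul_sum ..).symm
      _ ≤ 2 ^ d * (t : ℝ) ^ d * (2 * n * log n) := by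
          gcongr; exact sum_Ico_inv_sin_pi_mul_div_le hn
      _ = 2 ^ (d + 1) * (t : ℝ) ^ d * n * log n := by ring
end

section
/- Let T₀ be the middle real root of 4x³ − 30x + 27 and define u(T) = (−8T³ + 48T² − 60T + 27)/(6T²). Then u(T₀) equals the smallest root of 27x³ − 498x² + 1164x − 722, and T₀ minimizes u on the interval [1, 3/2]. -/
/-!
Since `u'(T) = -p(T) / (3 T³)` with `p x = 4x³ - 30x + 27`, the roots of `p` are the critical
points of `u`, and modulo `p(T₀) = 0` one has
`u T - u T₀ = (T - T₀)² (30 - 4T₀² - 8T₀T) / (6 T₀ T²)`,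
which is nonnegative for `T₀ ≈ 1.05` and `T ≤ 3/2`. Eliminating `T₀` from `p(T₀) = 0` shows that
`u(T₀)` is a root of `q x = 27x³ - 498x² + 1164x - 722`; it is the smallest one because
`u(T₀) < 6/5` and `q` is increasing on `(-∞, 6/5]`.
-/

namespace AsymptoticRatio

open Set

def p (x : ℝ) : ℝ := 4 * x ^ 3 - 30 * x + 27

def q (x : ℝ) : ℝ := 27 * x ^ 3 - 498 * x ^ 2 + 1164 * x - 722

noncomputable def u (T : ℝ) : ℝ := (-8 * T ^ 3 + 48 * T ^ 2 - 60 * T + 27) / (6 * T ^ 2)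

lemma p_sub_p (x y : ℝ) : p x - p y = (x - y) * (4 * (x ^ 2 + x * y + y ^ 2) - 30) := by
  unfold p; ring

lemma p_strictMonoOn_Ici : StrictMonoOn p (Ici 2) := by
  intro x (hx : 2 ≤ x) y (hy : 2 ≤ y) hxy
  have hfac : 0 < 4 * (y ^ 2 + y * x + x ^ 2) - 30 := by nlinarith
  nlinarith [p_sub_p y x, mul_pos (sub_pos.2 hxy) hfac]

lemma p_strictMonoOn_Iic : StrictMonoOn p (Iic (-3)) := by
  intro x (hx : x ≤ -3) y (hy : y ≤ -3) hxy
  have hfac : 0 < 4 * (y ^ 2 + y * x + x ^ 2) - 30 := by nlinarith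
  nlinarith [p_sub_p y x, mul_pos (sub_pos.2 hxy) hfac]

lemma p_pos_of_mem_Icc {x : ℝ} (hx : x ∈ Icc (-3) 1) : 0 < p x := by
  obtain ⟨h₁, h₂⟩ := hx
  unfold p
  nlinarith [mul_nonneg (mul_nonneg (sub_nonneg.2 h₂) (neg_le_iff_add_nonneg.1 h₁))
    (by linarith : (0 : ℝ) ≤ 2 - x)]

lemma p_neg_of_mem_Icc {x : ℝ} (hx : x ∈ Icc (53 / 50) 2) : p x < 0 := by
  obtain ⟨h₁, h₂⟩ := hx
  unfold p
  nlinarith [mul_nonneg (sub_nonneg.2 h₁) (sub_nonneg.2 h₂),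
    mul_nonneg (mul_nonneg (sub_nonneg.2 h₁) (sub_nonneg.2 h₁)) (sub_nonneg.2 h₂)]

/-- Outside `[-3, 2]` the cubic `p` is monotone, so a root with roots on both sides lies in
`[-3, 2]`, where the sign of `p` pins it down. -/
lemma middle_root_mem_Ioo {T₀ a b : ℝ} (hT₀ : p T₀ = 0) (ha : p a = 0) (hb : p b = 0)
    (haT₀ : a < T₀) (hT₀b : T₀ < b) : T₀ ∈ Ioo 1 (53 / 50) := by
  have hlow : -3 ≤ T₀ := by
    by_contra! h
    exact haT₀.ne (p_strictMonoOn_Iic.injOn (haT₀.trans h).le h.le (ha.trans hT₀.symm))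
  have hhigh : T₀ ≤ 2 := by
    by_contra! h
    exact hT₀b.ne (p_strictMonoOn_Ici.injOn h.le (h.trans hT₀b).le (hT₀.trans hb.symm))
  constructor
  · by_contra! h
    exact (p_pos_of_mem_Icc ⟨hlow, h⟩).ne' hT₀
  · by_contra! h
    exact (p_neg_of_mem_Icc ⟨h, hhigh⟩).ne hT₀

lemma q_u_eq_zero {T₀ : ℝ} (hT₀ : T₀ ≠ 0) (hp : p T₀ = 0) : q (u T₀) = 0 := by
  unfold q u
  unfold p at hp
  field_simp
  linear_combination (-3456 * T₀ ^ 6 + 14400 * T₀ ^ 5 + 12960 * T₀ ^ 4 - 128412 * T₀ ^ 3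
    + 194400 * T₀ ^ 2 - 109350 * T₀ + 19683) * hp

lemma u_le_of_mem_Ioo {T₀ : ℝ} (hT₀ : T₀ ∈ Ioo 1 (53 / 50)) (hp : p T₀ = 0) :
    u T₀ ≤ 119 / 100 := by
  obtain ⟨h₁, h₂⟩ := hT₀
  unfold u
  unfold p at hp
  rw [div_le_iff₀ (by positivity)]
  nlinarith [mul_pos (mul_pos (by linarith : (0 : ℝ) < T₀) (sub_pos.2 h₂))
    (by linarith : (0 : ℝ) < 2 - T₀)]

lemma q_strictMonoOn_Iic : StrictMonoOn q (Iic (6 / 5)) := by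
  intro x (hx : x ≤ 6 / 5) y (hy : y ≤ 6 / 5) hxy
  have hfac : 0 < 27 * (y ^ 2 + x * y + x ^ 2) - 498 * (y + x) + 1164 := by
    nlinarith [mul_nonneg (sub_nonneg.2 hx) (sub_nonneg.2 hy)]
  have hsub : q y - q x = (y - x) * (27 * (y ^ 2 + x * y + x ^ 2) - 498 * (y + x) + 1164) := by
    unfold q; ring
  nlinarith [mul_pos (sub_pos.2 hxy) hfac]

lemma isLeast_q_roots {y : ℝ} (hy : q y = 0) (hy' : y ≤ 6 / 5) : IsLeast {x | q x = 0} y := by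
  refine ⟨hy, fun x (hx : q x = 0) => ?_⟩
  by_contra! hxy
  exact (q_strictMonoOn_Iic (hxy.le.trans hy') hy' hxy).ne (hx.trans hy.symm)

lemma u_sub_u {T₀ T : ℝ} (hT₀ : T₀ ≠ 0) (hT : T ≠ 0) (hp : p T₀ = 0) :
    u T - u T₀ = (T - T₀) ^ 2 * (30 - 4 * T₀ ^ 2 - 8 * T₀ * T) / (6 * T₀ * T ^ 2) := by
  unfold u
  unfold p at hp
  rw [div_sub_div _ _ (by positivity) (by positivity),
    div_eq_div_iff (by positivity) (by positivity)]
  linear_combination (36 * T₀ * T ^ 2 * (T₀ ^ 2 - T ^ 2)) * hp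

lemma u_le_u {T₀ T : ℝ} (hT₀ : 0 < T₀) (hT : 0 < T) (hp : p T₀ = 0)
    (hsmall : 4 * T₀ ^ 2 + 8 * T₀ * T ≤ 30) : u T₀ ≤ u T := by
  rw [← sub_nonneg, u_sub_u hT₀.ne' hT.ne' hp]
  have hfac : 0 ≤ 30 - 4 * T₀ ^ 2 - 8 * T₀ * T := by linarith
  positivity

end AsymptoticRatio

open AsymptoticRatio in
theorem middle_root_minimizes (T0 : ℝ)
    (hroot : 4 * T0 ^ 3 - 30 * T0 + 27 = 0)
    (hmid : ∃ a b : ℝ, a < T0 ∧ T0 < b ∧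
      4 * a ^ 3 - 30 * a + 27 = 0 ∧ 4 * b ^ 3 - 30 * b + 27 = 0) :
    IsLeast {x : ℝ | 27 * x ^ 3 - 498 * x ^ 2 + 1164 * x - 722 = 0}
      ((-8 * T0 ^ 3 + 48 * T0 ^ 2 - 60 * T0 + 27) / (6 * T0 ^ 2)) ∧
    ∀ T ∈ Set.Icc (1 : ℝ) (3 / 2),
      (-8 * T0 ^ 3 + 48 * T0 ^ 2 - 60 * T0 + 27) / (6 * T0 ^ 2) ≤
      (-8 * T ^ 3 + 48 * T ^ 2 - 60 * T + 27) / (6 * T ^ 2) := by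
  obtain ⟨a, b, haT0, hT0b, ha, hb⟩ := hmid
  have hT0 := middle_root_mem_Ioo hroot ha hb haT0 hT0b
  have hT0pos : 0 < T0 := one_pos.trans hT0.1
  refine ⟨isLeast_q_roots (q_u_eq_zero hT0pos.ne' hroot)
    ((u_le_of_mem_Ioo hT0 hroot).trans (by norm_num)), fun T ⟨hT1, hT2⟩ => ?_⟩
  refine u_le_u hT0pos (one_pos.trans_le hT1) hroot ?_
  nlinarith [hT0.2, mul_le_mul hT0.2.le hT2 (by linarith) (by norm_num : (0 : ℝ) ≤ 53 / 50)]
end
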